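/- Fix a degree sequence D and let T be a tree that minimizes the Sombor index among all trees with degree sequence D. Then for every path v₁v₂…v_t in T with t ≥ 4 and deg(v₁) < deg(v_t), it holds that deg(v₂) ≤ deg(v_{t−1}). -/

import Mathlib

open SimpleGraph

/-- Degree of a vertex. -/
noncomputable def deg {V : Type*} (G : SimpleGraph V) (v : V) : ℕ :=
  Nat.card (G.neighborSet v)

/-- Sombor index. -/
noncomputable def somborIndex {V : Type*} (G : SimpleGraph V) : ℝ :=
  ∑ᶠ e ∈ G.edgeSet,
    Sym2.lift ⟨fun u v => Real.sqrt ((deg G u : ℝ) ^ 2 + (deg G v : ℝ) ^ 2),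
      fun u v => by simp [add_comm]⟩ e

/-- Multiset of degrees of non-pendant vertices. -/
noncomputable def degSeq {V : Type*} [Fintype V] (G : SimpleGraph V) : Multiset ℕ :=
  ((Finset.univ : Finset V).filter (fun v => deg G v ≠ 1)).val.map (deg G)

def pathCondition {V : Type*} (G : SimpleGraph V) : Prop :=
  ∀ ⦃u v : V⦄ (p : G.Walk u v), p.IsPath → 3 ≤ p.length →
    deg G u < deg G v → deg G (p.getVert 1) ≤ deg G (p.getVert (p.length - 1))

def attachPendants {V : Type*} (G : SimpleGraph V) (v : V) (k : ℕ) :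
    SimpleGraph (V ⊕ Fin k) where
  Adj x y :=
    match x, y with
    | Sum.inl a, Sum.inl b => G.Adj a b
    | Sum.inl a, Sum.inr _ => a = v
    | Sum.inr _, Sum.inl b => b = v
    | Sum.inr _, Sum.inr _ => False
  symm := by
    constructor
    rintro (a | i) (b | j) h
    · exact h.symm
    · exact h
    · exact h
    · exact h.elim
  loopless := by
    constructor
    rintro (a | i) h
    · exact G.irrefl h
    · exact h

/-! Suppose `deg v₁ < deg v_t` but `deg v₂ > deg v_{t-1}`. Replacing the edges `v₁v₂`, `v_{t-1}v_t`
by `v₁v_{t-1}`, `v₂v_t` (a 2-switch) keeps every degree, and since the subpath `v₂ … v_{t-1}`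
survives, the new graph is connected with as many edges as the tree, hence is again a tree with
degree sequence `D`. Only four edge weights change, and because `(x, y) ↦ √(x² + y²)` has strictly
negative mixed differences the Sombor index strictly drops, contradicting minimality. -/

open Finset

lemma List.nodup_four_iff {α : Type*} {a b c d : α} :
    [a, b, c, d].Nodup ↔ (a ≠ b ∧ a ≠ c ∧ a ≠ d) ∧ (b ≠ c ∧ b ≠ d) ∧ c ≠ d := by
  simp

lemma Real.sqrt_sq_add_sq_exchange_lt {a b c d : ℝ} (ha : 0 ≤ a) (had : a < d) (hc : 0 ≤ c)
    (hcb : c < b) :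
    √(a ^ 2 + c ^ 2) + √(b ^ 2 + d ^ 2) < √(a ^ 2 + b ^ 2) + √(c ^ 2 + d ^ 2) := by
  -- `√(y² + b²) - √(y² + c²) = (b² - c²) / (√(y² + b²) + √(y² + c²))` decreases in `y ≥ 0`.
  have hA := Real.sq_sqrt (by positivity : 0 ≤ a ^ 2 + b ^ 2)
  have hB := Real.sq_sqrt (by positivity : 0 ≤ a ^ 2 + c ^ 2)
  have hC := Real.sq_sqrt (by positivity : 0 ≤ b ^ 2 + d ^ 2)
  have hD := Real.sq_sqrt (by positivity : 0 ≤ c ^ 2 + d ^ 2)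
  have hAC : √(a ^ 2 + b ^ 2) < √(b ^ 2 + d ^ 2) := Real.sqrt_lt_sqrt (by positivity) (by nlinarith)
  have hBD : √(a ^ 2 + c ^ 2) < √(c ^ 2 + d ^ 2) := Real.sqrt_lt_sqrt (by positivity) (by nlinarith)
  have hBA : √(a ^ 2 + c ^ 2) < √(a ^ 2 + b ^ 2) := Real.sqrt_lt_sqrt (by positivity) (by nlinarith)
  nlinarith [Real.sqrt_nonneg (a ^ 2 + c ^ 2)]

namespace SimpleGraph

variable {V : Type*} {G : SimpleGraph V}

lemma Connected.of_forall_adj_reachable {H : SimpleGraph V} (hG : G.Connected)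
    (h : ∀ ⦃x y⦄, G.Adj x y → H.Reachable x y) : H.Connected := by
  have := hG.nonempty
  refine ⟨fun x y => ?_⟩
  obtain ⟨p⟩ := hG.preconnected x y
  induction p with
  | nil => rfl
  | cons hxy _ ih => exact (h hxy).trans ih

lemma IsAcyclic.not_adj_of_isPath {x y : V} (hG : G.IsAcyclic) {p : G.Walk x y} (hp : p.IsPath)
    (hlen : 1 < p.length) : ¬G.Adj x y := fun hxy => by
  have := congrArg (fun p : G.Path x y => p.1.length)
    ((hG.subsingleton_path x y).elim ⟨p, hp⟩ (Path.singleton hxy))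
  simp at this
  omega

lemma Walk.exists_eq_cons_concat {x y : V} (p : G.Walk x y) (hp : 2 ≤ p.length) :
    ∃ (b c : V) (hxb : G.Adj x b) (q : G.Walk b c) (hcy : G.Adj c y),
      p = cons hxb (q.concat hcy) := by
  cases p with
  | nil => simp at hp
  | cons hxb p =>
    have hp : ¬p.Nil := by rw [not_nil_iff_lt_length]; simp at hp; omega
    exact ⟨_, _, hxb, p.dropLast, p.adj_penultimate hp, by rw [concat_dropLast]⟩

lemma deg_eq_degree (G : SimpleGraph V) (v : V) [Fintype (G.neighborSet v)] :
    deg G v = G.degree v := by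
  rw [deg, Nat.card_eq_fintype_card, card_neighborSet_eq_degree]

lemma degree_eq_of_edgeFinset_eq_sdiff_union [Fintype V] [DecidableEq V] {H : SimpleGraph V}
    [DecidableRel G.Adj] [DecidableRel H.Adj] {R A : Finset (Sym2 V)} (hR : R ⊆ G.edgeFinset)
    (hA : Disjoint G.edgeFinset A) (hH : H.edgeFinset = G.edgeFinset \ R ∪ A) {x : V}
    (hx : #{e ∈ R | x ∈ e} = #{e ∈ A | x ∈ e}) : H.degree x = G.degree x := by
  rw [← card_incidenceFinset_eq_degree, ← card_incidenceFinset_eq_degree,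
    incidenceFinset_eq_filter, incidenceFinset_eq_filter, hH, filter_union,
    card_union_of_disjoint (disjoint_filter_filter (hA.mono_left sdiff_subset)), ← hx,
    ← card_union_of_disjoint (disjoint_filter_filter sdiff_disjoint), ← filter_union,
    sdiff_union_of_subset hR]

lemma card_filter_mem_pair_eq [DecidableEq V] {u b c v : V} (h : [u, b, c, v].Nodup) (x : V) :
    #{e ∈ ({s(u, b), s(c, v)} : Finset (Sym2 V)) | x ∈ e} =
      #{e ∈ ({s(u, c), s(b, v)} : Finset (Sym2 V)) | x ∈ e} := by
  obtain ⟨⟨hub, huc, huv⟩, ⟨hbc, hbv⟩, hcv⟩ := List.nodup_four_iff.1 h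
  by_cases hx : x = u ∨ x = b ∨ x = c ∨ x = v
  · rcases hx with rfl | rfl | rfl | rfl <;>
      simp [filter_insert, filter_singleton, hub, huc, huv, hbc, hbv, hcv, Ne.symm hub,
        Ne.symm huc, Ne.symm huv, Ne.symm hbc, Ne.symm hbv, Ne.symm hcv]
  · simp only [not_or] at hx
    simp [filter_insert, filter_singleton, hx]

variable (G) in
def twoSwitch (u b c v : V) : SimpleGraph V :=
  fromEdgeSet (G.edgeSet \ {s(u, b), s(c, v)} ∪ {s(u, c), s(b, v)})

section TwoSwitch

variable {u b c v : V}

lemma edgeSet_twoSwitch (huc : u ≠ c) (hbv : b ≠ v) :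
    (G.twoSwitch u b c v).edgeSet = G.edgeSet \ {s(u, b), s(c, v)} ∪ {s(u, c), s(b, v)} := by
  rw [twoSwitch, edgeSet_fromEdgeSet, sdiff_eq_left, Set.disjoint_left]
  rintro e (⟨he, -⟩ | he)
  · exact G.not_isDiag_of_mem_edgeSet he
  · rcases he with rfl | rfl <;> simpa

lemma edgeFinset_twoSwitch [Fintype V] [DecidableEq V] [DecidableRel G.Adj]
    [Fintype (G.twoSwitch u b c v).edgeSet] (huc : u ≠ c) (hbv : b ≠ v) :
    (G.twoSwitch u b c v).edgeFinset =
      G.edgeFinset \ {s(u, b), s(c, v)} ∪ {s(u, c), s(b, v)} := by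
  apply coe_injective
  push_cast
  exact edgeSet_twoSwitch huc hbv

lemma deg_twoSwitch [Finite V] (h : [u, b, c, v].Nodup) (hub : G.Adj u b) (hcv : G.Adj c v)
    (hnuc : ¬G.Adj u c) (hnbv : ¬G.Adj b v) (x : V) :
    deg (G.twoSwitch u b c v) x = deg G x := by
  classical
  have := Fintype.ofFinite V
  obtain ⟨⟨-, huc, -⟩, ⟨-, hbv⟩, -⟩ := List.nodup_four_iff.1 h
  rw [deg_eq_degree, deg_eq_degree]
  exact degree_eq_of_edgeFinset_eq_sdiff_union (by simp [insert_subset_iff, hub, hcv])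
    (by simp [hnuc, hnbv]) (edgeFinset_twoSwitch huc hbv) (card_filter_mem_pair_eq h x)

lemma ncard_edgeSet_twoSwitch [Finite V] (h : [u, b, c, v].Nodup) (hub : G.Adj u b)
    (hcv : G.Adj c v) (hnuc : ¬G.Adj u c) (hnbv : ¬G.Adj b v) :
    (G.twoSwitch u b c v).edgeSet.ncard = G.edgeSet.ncard := by
  obtain ⟨⟨-, huc, huv⟩, ⟨-, hbv⟩, -⟩ := List.nodup_four_iff.1 h
  have hsub : ({s(u, b), s(c, v)} : Set (Sym2 V)) ⊆ G.edgeSet := by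
    simp [Set.insert_subset_iff, hub, hcv]
  have hdisj : Disjoint (G.edgeSet \ {s(u, b), s(c, v)}) {s(u, c), s(b, v)} := by
    simp [Set.disjoint_insert_right, hnuc, hnbv]
  have := Set.ncard_le_ncard hsub
  rw [edgeSet_twoSwitch huc hbv, Set.ncard_union_eq hdisj, Set.ncard_sdiff hsub,
    Set.ncard_pair (by simp [huc, huv]), Set.ncard_pair (by simp [hub.ne, huv])] at *
  omega

lemma Connected.twoSwitch (hG : G.Connected) (hub : G.Adj u b) (hcv : G.Adj c v)
    (q : G.Walk b c) (hqub : s(u, b) ∉ q.edges) (hqcv : s(c, v) ∉ q.edges) (huc : u ≠ c)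
    (hbv : b ≠ v) : (G.twoSwitch u b c v).Connected := by
  set H := G.twoSwitch u b c v
  have hE : ∀ e ∈ G.edgeSet, e ≠ s(u, b) → e ≠ s(c, v) → e ∈ H.edgeSet := fun e he h1 h2 => by
    simp [H, edgeSet_twoSwitch huc hbv, he, h1, h2]
  have hbc : H.Reachable b c := ⟨q.transfer H fun e he =>
    hE e (q.edges_subset_edgeSet he) (ne_of_mem_of_not_mem he hqub) (ne_of_mem_of_not_mem he hqcv)⟩
  have hub' : H.Reachable u b := by
    refine Adj.reachable (?_ : H.Adj u c) |>.trans hbc.symm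
    simp [H, ← mem_edgeSet, edgeSet_twoSwitch huc hbv]
  have hcv' : H.Reachable c v := by
    refine hbc.symm.trans (Adj.reachable (?_ : H.Adj b v))
    simp [H, ← mem_edgeSet, edgeSet_twoSwitch huc hbv]
  refine hG.of_forall_adj_reachable fun x y hxy => ?_
  by_cases h1 : s(x, y) = s(u, b)
  · rcases Sym2.eq_iff.1 h1 with ⟨rfl, rfl⟩ | ⟨rfl, rfl⟩
    exacts [hub', hub'.symm]
  by_cases h2 : s(x, y) = s(c, v)
  · rcases Sym2.eq_iff.1 h2 with ⟨rfl, rfl⟩ | ⟨rfl, rfl⟩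
    exacts [hcv', hcv'.symm]
  exact Adj.reachable (hE _ hxy h1 h2)

lemma IsTree.twoSwitch [Finite V] (hG : G.IsTree) (h : [u, b, c, v].Nodup) (hub : G.Adj u b)
    (hcv : G.Adj c v) (hnuc : ¬G.Adj u c) (hnbv : ¬G.Adj b v) (q : G.Walk b c)
    (hqub : s(u, b) ∉ q.edges) (hqcv : s(c, v) ∉ q.edges) : (G.twoSwitch u b c v).IsTree := by
  obtain ⟨⟨-, huc, -⟩, ⟨-, hbv⟩, -⟩ := List.nodup_four_iff.1 h
  rw [isTree_iff_connected_and_card] at hG ⊢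
  refine ⟨hG.1.twoSwitch hub hcv q hqub hqcv huc hbv, ?_⟩
  rw [Nat.card_coe_set_eq, ncard_edgeSet_twoSwitch h hub hcv hnuc hnbv, ← Nat.card_coe_set_eq]
  exact hG.2

end TwoSwitch

noncomputable def somborWeight (d : V → ℕ) : Sym2 V → ℝ :=
  Sym2.lift ⟨fun x y => √((d x : ℝ) ^ 2 + (d y : ℝ) ^ 2), fun x y => by simp [add_comm]⟩

lemma somborIndex_eq_sum [Fintype G.edgeSet] :
    somborIndex G = ∑ e ∈ G.edgeFinset, somborWeight (deg G) e := by
  rw [somborIndex, ← coe_edgeFinset, finsum_mem_coe_finset]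
  rfl

lemma somborIndex_twoSwitch_lt [Finite V] {u b c v : V} (h : [u, b, c, v].Nodup)
    (hub : G.Adj u b) (hcv : G.Adj c v) (hnuc : ¬G.Adj u c) (hnbv : ¬G.Adj b v)
    (huv : deg G u < deg G v) (hcb : deg G c < deg G b) :
    somborIndex (G.twoSwitch u b c v) < somborIndex G := by
  classical
  have := Fintype.ofFinite V
  have hdeg : deg (G.twoSwitch u b c v) = deg G := funext (deg_twoSwitch h hub hcv hnuc hnbv)
  obtain ⟨⟨hub', huc, huv'⟩, ⟨-, hbv⟩, -⟩ := List.nodup_four_iff.1 h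
  rw [somborIndex_eq_sum, somborIndex_eq_sum, hdeg, edgeFinset_twoSwitch huc hbv,
    sum_union (by simp [hnuc, hnbv]), sum_sdiff_eq_sub (by simp [insert_subset_iff, hub, hcv]),
    sum_pair (by simp [huc, huv']), sum_pair (by simp [hub', huv'])]
  have := Real.sqrt_sq_add_sq_exchange_lt (Nat.cast_nonneg _) (Nat.cast_lt.2 huv)
    (Nat.cast_nonneg _) (Nat.cast_lt.2 hcb)
  simp only [somborWeight, Sym2.lift_mk]
  linarith

theorem IsTree.exists_isTree_deg_eq_somborIndex_lt [Finite V] {u b c v : V} (hG : G.IsTree)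
    (hub : G.Adj u b) (q : G.Walk b c) (hcv : G.Adj c v)
    (hp : (Walk.cons hub (q.concat hcv)).IsPath) (huv : deg G u < deg G v)
    (hcb : deg G c < deg G b) :
    ∃ H : SimpleGraph V, H.IsTree ∧ deg H = deg G ∧ somborIndex H < somborIndex G := by
  simp only [Walk.cons_isPath_iff, Walk.concat_isPath_iff, Walk.support_concat,
    List.mem_append, List.mem_singleton, not_or] at hp
  obtain ⟨⟨hq, hvq⟩, huq, huv'⟩ := hp
  have hbc : b ≠ c := fun hbc => hcb.ne' (congrArg (deg G) hbc)
  have hq1 : 1 ≤ q.length :=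
    Nat.one_le_iff_ne_zero.2 fun h0 => hbc (Walk.eq_of_length_eq_zero h0)
  have h : [u, b, c, v].Nodup := List.nodup_four_iff.2
    ⟨⟨hub.ne, fun huc => huq (huc ▸ q.end_mem_support), huv'⟩,
      ⟨hbc, fun hbv => hvq (hbv ▸ q.start_mem_support)⟩, hcv.ne⟩
  have hnuc : ¬G.Adj u c := hG.isAcyclic.not_adj_of_isPath (p := .cons hub q)
    (Walk.cons_isPath_iff _ _ |>.2 ⟨hq, huq⟩) (by simp; omega)
  have hnbv : ¬G.Adj b v := hG.isAcyclic.not_adj_of_isPath (p := q.concat hcv)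
    (hq.concat hvq hcv) (by simp; omega)
  exact ⟨_, hG.twoSwitch h hub hcv hnuc hnbv q
      (fun he => huq (q.fst_mem_support_of_mem_edges he))
      (fun he => hvq (q.snd_mem_support_of_mem_edges he)),
    funext (deg_twoSwitch h hub hcv hnuc hnbv), somborIndex_twoSwitch_lt h hub hcv hnuc hnbv huv hcb⟩

lemma deg_iso {W : Type*} {H : SimpleGraph W} (φ : G ≃g H) (x : V) : deg H (φ x) = deg G x :=
  (Nat.card_congr (φ.mapNeighborSet x)).symm

lemma somborIndex_iso {W : Type*} {H : SimpleGraph W} (φ : G ≃g H) :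
    somborIndex G = somborIndex H := by
  refine finsum_mem_eq_of_bijOn (Sym2.map φ) ⟨fun e he => (Iso.map_mem_edgeSet_iff φ).2 he,
    (Sym2.map.injective φ.injective).injOn, fun e he => ⟨Sym2.map φ.symm e,
      (Iso.map_mem_edgeSet_iff φ.symm).2 he, by simp [Sym2.map_map]⟩⟩ ?_
  rintro ⟨x, y⟩ -
  simp [deg_iso]

lemma degSeq_eq_filter_map [Fintype V] (G : SimpleGraph V) :
    degSeq G = (univ.val.map (deg G)).filter (· ≠ 1) := by
  rw [degSeq, Multiset.filter_map, filter_val]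
  rfl

lemma degSeq_iso [Fintype V] {W : Type*} [Fintype W] {H : SimpleGraph W} (φ : G ≃g H) :
    degSeq H = degSeq G := by
  have hmap : (univ.val.map φ : Multiset W) = univ.val := Multiset.map_univ_val_equiv φ.toEquiv
  have hdeg : deg H ∘ φ = deg G := funext (deg_iso φ)
  rw [degSeq_eq_filter_map, degSeq_eq_filter_map, ← hmap, Multiset.map_map, hdeg]

end SimpleGraph

theorem minimizer_pathCondition_general {V : Type*} [Fintype V] (T : SimpleGraph V) (hT : T.IsTree)
    (D : List ℕ) (hdeg : degSeq T = ↑D)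
    (hmin : ∀ (n : ℕ) (T' : SimpleGraph (Fin n)), T'.IsTree → degSeq T' = ↑D →
      somborIndex T ≤ somborIndex T') :
    pathCondition T := by
  intro u v p hp hlen huv
  obtain ⟨b, c, hub, q, hcv, rfl⟩ := p.exists_eq_cons_concat (by omega)
  by_contra! hcb
  obtain ⟨H, hH, hdegH, hlt⟩ := hT.exists_isTree_deg_eq_somborIndex_lt hub q hcv hp huv
    (by simpa [Walk.concat_eq_append, Walk.getVert_append] using hcb)
  let φ := H.overFinIso rfl
  have hmin' := hmin _ _ (φ.isTree_iff.1 hH)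
    (by rw [degSeq_iso φ, degSeq_eq_filter_map, hdegH, ← degSeq_eq_filter_map, hdeg])
  rw [← somborIndex_iso φ] at hmin'
  linarith

/-- A tree minimizing the Sombor index among trees with degree sequence `D`
satisfies the path condition: for every path `v₁…v_t` with `t ≥ 4` and
`deg v₁ < deg v_t`, one has `deg v₂ ≤ deg v_{t−1}`. -/
theorem minimizer_pathCondition {V : Type*} [Fintype V] (T : SimpleGraph V) (hT : T.IsTree)
    (D : List ℕ) (hsort : D.Pairwise (· ≥ ·)) (hD : ∀ d ∈ D, 2 ≤ d)
    (hdeg : degSeq T = ↑D)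
    (hmin : ∀ (n : ℕ) (T' : SimpleGraph (Fin n)), T'.IsTree → degSeq T' = ↑D →
      somborIndex T ≤ somborIndex T') :
    pathCondition T :=
  minimizer_pathCondition_general T hT D hdeg hmin
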